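/- Fix positive reals ε, G and positive integers K, L, N, B with N = B·K·L, B ≥ 2. For M a positive integer let d(M) := M·(N−KL)·(KL)²·G² and let γ(M) := (G/(B−1))/(2ε·d(M)) · (1 + √(1 + 2(B−1)²·ε·d(M)/(K·G²))) be the positive root of ε·d(M)·γ² − (G/(B−1))·γ − 1/(2K) = 0. Then √M · γ(M) converges, as M → ∞, to 1/√(2ε·K³·L²·(N−KL)·G²); in particular γ(M) = Θ(1/√M). -/

import Mathlib

/-!
Writing `e = ε d(M)/M` and `g = G/(B-1)`, the root is `γ(M) = a/M · (1 + √(1 + b M))` with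
`a = g/(2e)` and `b = 2e/(K g²)` independent of `M`. Hence `√M · γ(M) = a (1/√M + √(1/M + b))`,
which tends to `a √b = 1/√(2eK)`.
-/

open Filter Topology

theorem tendsto_sqrt_mul_div_mul_one_add_sqrt (a b : ℝ) :
    Tendsto (fun x : ℝ => √x * (a / x * (1 + √(1 + b * x)))) atTop (𝓝 (a * √b)) := by
  have hlim : Tendsto (fun x : ℝ => a * ((√x)⁻¹ + √(x⁻¹ + b))) atTop
      (𝓝 (a * (0 + √(0 + b)))) :=
    ((tendsto_inv_atTop_zero.comp Real.tendsto_sqrt_atTop).add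
      ((tendsto_inv_atTop_zero.add_const b).sqrt)).const_mul a
  rw [zero_add, zero_add] at hlim
  refine hlim.congr' ?_
  filter_upwards [eventually_gt_atTop 0] with x hx
  have hsqrt : √(x⁻¹ + b) = √(1 + b * x) / √x := by
    rw [← Real.sqrt_div' _ hx.le]
    congr 1
    field_simp
  have hsx : 0 < √x := Real.sqrt_pos.mpr hx
  rw [hsqrt]
  field_simp
  rw [Real.sq_sqrt hx.le]

theorem div_mul_sqrt_eq_one_div_sqrt {g e : ℝ} (hg : 0 < g) (he : 0 < e) (k : ℝ) :
    g / (2 * e) * √(2 * e / (k * g ^ 2)) = 1 / √(2 * e * k) := by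
  rw [← Real.sqrt_sq (by positivity : 0 ≤ g / (2 * e)), ← Real.sqrt_mul (sq_nonneg _),
    one_div, ← Real.sqrt_inv]
  congr 1
  field_simp

/-- The positive root of `e x γ² - g γ - 1/(2k) = 0`, rescaled by `√x`, tends to `1/√(2ek)`. -/
theorem tendsto_sqrt_mul_quadratic_root {g e : ℝ} (hg : 0 < g) (he : 0 < e) (k : ℝ) :
    Tendsto (fun x : ℝ => √x * (g / (2 * (e * x)) * (1 + √(1 + 2 * (e * x) / (k * g ^ 2)))))
      atTop (𝓝 (1 / √(2 * e * k))) := by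
  rw [← div_mul_sqrt_eq_one_div_sqrt hg he k]
  refine (tendsto_sqrt_mul_div_mul_one_add_sqrt (g / (2 * e)) (2 * e / (k * g ^ 2))).congr
    fun x => ?_
  congr 2
  · ring
  · congr 3
    ring

/-- Proposition 2: the required SNR `γ(M)` to achieve MSE `ε` scales as `1/√M`:
`√M · γ(M)` converges to `1/√(2εK³L²(N−KL)G²)` as `M → ∞`. -/
theorem required_snr_inverse_sqrt_M
    (ε G : ℝ) (K L N B : ℕ)
    (hε : 0 < ε) (hG : 0 < G) (hK : 0 < K) (hL : 0 < L) (hB : 2 ≤ B)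
    (hN : N = B * K * L)
    (d γ : ℕ → ℝ)
    (hd : ∀ M : ℕ, d M = (M : ℝ) * ((N : ℝ) - K * L) * ((K : ℝ) * L) ^ 2 * G ^ 2)
    (hγ : ∀ M : ℕ, γ M = (G / ((B : ℝ) - 1)) / (2 * ε * d M) *
      (1 + Real.sqrt (1 + 2 * ((B : ℝ) - 1) ^ 2 * ε * d M / ((K : ℝ) * G ^ 2)))) :
    Tendsto (fun M : ℕ => Real.sqrt M * γ M) atTop
      (nhds (1 / Real.sqrt (2 * ε * (K : ℝ) ^ 3 * (L : ℝ) ^ 2 * ((N : ℝ) - K * L) * G ^ 2))) := by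
  have hB1 : (0 : ℝ) < B - 1 := by
    have : (2 : ℝ) ≤ B := by exact_mod_cast hB
    linarith
  have hNKL : (N : ℝ) - K * L = ((B : ℝ) - 1) * K * L := by
    rw [hN]
    push_cast
    ring
  have hc : 0 < ε * (((N : ℝ) - K * L) * ((K : ℝ) * L) ^ 2 * G ^ 2) := by
    rw [hNKL]
    positivity
  have hlim := (tendsto_sqrt_mul_quadratic_root (div_pos hG hB1) hc K).comp
    tendsto_natCast_atTop_atTop
  convert hlim using 3 with M
  · rw [Function.comp_apply, hγ, hd]
    congr 2
    · ring
    · field_simp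
  · congr 1
    ring
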